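/- Let X₁ and X₂ be topological spaces and let f be a contact-preserving Boolean isomorphism between their regular closed algebras. If there is a regular closed subset A of X₁ whose interior is a nonempty connected subspace of X₁ while the interior of f(A) is not a preconnected subspace of X₂, then it is not the case that both X₁ and X₂ have at most four points; that is, at least one of the two spaces has at least five points (and by the preceding result the other has at least four). -/

import Mathlib

/-- A set is regular closed if it equals the closure of its interior. -/
def RegClosed {X : Type} [TopologicalSpace X] (A : Set X) : Prop :=
  A = closure (interior A)

/-- A contact-preserving Boolean isomorphism between the regular closed algebras of
`X₁` and `X₂`: a bijection `f` from the regular closed subsets of `X₁` onto those of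
`X₂` with `f ∅ = ∅`, `f X₁ = X₂`, `f (A ∪ B) = f A ∪ f B`,
`f (closure (X₁ ∖ A)) = closure (X₂ ∖ f A)`, and `A ∩ B ≠ ∅ ↔ f A ∩ f B ≠ ∅`. -/
def ContactIso {X₁ X₂ : Type} [TopologicalSpace X₁] [TopologicalSpace X₂]
    (f : Set X₁ → Set X₂) : Prop :=
  Set.BijOn f {A : Set X₁ | RegClosed A} {B : Set X₂ | RegClosed B} ∧
  f ∅ = ∅ ∧
  f Set.univ = Set.univ ∧
  (∀ A B : Set X₁, RegClosed A → RegClosed B → f (A ∪ B) = f A ∪ f B) ∧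
  (∀ A : Set X₁, RegClosed A → f (closure Aᶜ) = closure (f A)ᶜ) ∧
  (∀ A B : Set X₁, RegClosed A → RegClosed B →
    ((A ∩ B).Nonempty ↔ (f A ∩ f B).Nonempty))

/-!
Split the interior of `f A` into disjoint nonempty open sets `U`, `V`. Then `f A = cl U ∪ cl V`,
and pulling back along `f` writes `A = A₁ ∪ A₂` with `f A₁ = cl U`, `f A₂ = cl V`. As `A` is
connected, `A₁` and `A₂` meet, so by contact `cl U` and `cl V` meet, at a point of `f A` that is
not interior; hence `f A` is not open. A regular closed set is open iff it does not touch the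
closure of its complement, which contact detects, so `A` is not open either. Meets
`cl (int A ∩ int B)` are Boolean operations, hence preserved, so `int A₁` and `int A₂` are
disjoint; connectedness of `int A` then yields a point of `int A` outside both. With a point of
`A ∖ int A` and one outside `A` this gives five points in `X₁`; a point of `U`, one of `V`, one
of `f A ∖ int (f A)` and one outside `f A` give four in `X₂`.
-/

open Set Function

theorem Fin.injective_of_mem_of_notMem_pred {X : Type*} {n : ℕ} {S : Fin (n + 1) → Set X}
    (hS : Monotone S) {x : Fin (n + 1) → X} (hmem : ∀ i, x i ∈ S i)
    (hnotMem : ∀ i : Fin n, x i.succ ∉ S i.castSucc) : Injective x := by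
  suffices ∀ i j, i < j → x i ≠ x j from fun i j hij =>
    (lt_trichotomy i j).elim (fun h => absurd hij (this i j h))
      fun h => h.elim id fun h => absurd hij.symm (this j i h)
  intro i j hij hx
  obtain ⟨k, rfl⟩ := Fin.exists_succ_eq.2 (Fin.ne_zero_of_lt hij)
  exact hnotMem k (hx ▸ hS (Fin.le_castSucc_iff.2 hij) (hmem i))

theorem exists_le_card_of_injective {X : Type*} {n : ℕ} {x : Fin n → X} (hx : Injective x) :
    ∃ s : Finset X, n ≤ s.card :=
  ⟨Finset.univ.map ⟨x, hx⟩, by simp⟩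

section Topology

variable {X : Type*} [TopologicalSpace X]

theorem isOpen_iff_inter_closure_compl_eq_empty {s : Set X} :
    IsOpen s ↔ s ∩ closure sᶜ = ∅ := by
  rw [closure_compl, ← sdiff_eq, sdiff_eq_empty, subset_interior_iff_isOpen]

theorem closure_compl_union_closure_compl (s t : Set X) :
    (closure sᶜ ∪ closure tᶜ)ᶜ = interior s ∩ interior t := by
  rw [closure_compl, closure_compl, ← compl_inter, compl_compl]

theorem Disjoint.interior_closure {U V : Set X} (h : Disjoint U V) (hV : IsOpen V) :
    Disjoint (interior (closure U)) (interior (closure V)) :=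
  (((h.closure_left hV).mono_left interior_subset).closure_right isOpen_interior).mono_right
    interior_subset

theorem IsOpen.exists_split_of_not_isPreconnected {s : Set X}
    (hs : IsOpen s) (h : ¬IsPreconnected s) :
    ∃ U V, IsOpen U ∧ IsOpen V ∧ U.Nonempty ∧ V.Nonempty ∧ Disjoint U V ∧ U ∪ V = s := by
  simp only [IsPreconnected, not_forall, not_nonempty_iff_eq_empty, exists_prop] at h
  obtain ⟨u, v, hu, hv, hcover, hsu, hsv, huv⟩ := h
  refine ⟨s ∩ u, s ∩ v, hs.inter hu, hs.inter hv, hsu, hsv, ?_, ?_⟩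
  · rwa [disjoint_iff_inter_eq_empty, ← inter_inter_distrib_left]
  · rw [← inter_union_distrib_left, inter_eq_left.2 hcover]

theorem IsPreconnected.inter_nonempty_of_isClosed {s t : Set X} (h : IsPreconnected (s ∪ t))
    (hs : IsClosed s) (ht : IsClosed t) (hs' : s.Nonempty) (ht' : t.Nonempty) :
    (s ∩ t).Nonempty :=
  (isPreconnected_closed_iff.1 h s t hs ht subset_rfl (by rwa [union_inter_cancel_left])
    (by rwa [union_inter_cancel_right])).mono inter_subset_right

theorem exists_four_le_card_of_not_isOpen {B U V : Set X} (hUV : Disjoint U V)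
    (hUVB : U ∪ V ⊆ interior B)(hU : U.Nonempty) (hV : V.Nonempty) (hB : ¬IsOpen B) :
    ∃ s : Finset X, 4 ≤ s.card := by
  obtain ⟨u, hu⟩ := hU
  obtain ⟨v, hv⟩ := hV
  obtain ⟨p, hp⟩ := sdiff_nonempty.2 (mt subset_interior_iff_isOpen.1 hB)
  obtain ⟨w, hw⟩ := (nonempty_compl (s := B)).2 fun h => hB (h ▸ isOpen_univ)
  refine exists_le_card_of_injective (x := ![u, v, p, w]) <|
    Fin.injective_of_mem_of_notMem_pred (S := ![U, interior B, B, univ]) ?_ ?_ ?_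
  · refine Fin.monotone_iff_le_succ.2 fun i => ?_
    fin_cases i
    exacts [subset_union_left.trans hUVB, interior_subset, subset_univ B]
  · intro i
    fin_cases i
    exacts [hu, hUVB (Or.inr hv), hp.1, mem_univ w]
  · intro i
    fin_cases i
    exacts [hUV.notMem_of_mem_right hv, hp.2, hw]

theorem exists_five_le_card_of_not_isOpen {A U₁ U₂ : Set X} (hU₁ : IsOpen U₁)
    (hU₂ : IsOpen U₂) (hd : Disjoint U₁ U₂) (hsub : U₁ ∪ U₂ ⊆ interior A)
    (hc : IsPreconnected (interior A)) (h₁ : U₁.Nonempty) (h₂ : U₂.Nonempty) (hA : ¬IsOpen A) :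
    ∃ s : Finset X, 5 ≤ s.card := by
  obtain ⟨a₁, ha₁⟩ := h₁
  obtain ⟨a₂, ha₂⟩ := h₂
  obtain ⟨t, ht⟩ : (interior A \ (U₁ ∪ U₂)).Nonempty := by
    refine sdiff_nonempty.2 fun hcover => ?_
    rcases hc.subset_or_subset hU₁ hU₂ hd hcover with h | h
    exacts [hd.notMem_of_mem_right ha₂ (h (hsub (Or.inr ha₂))),
      hd.notMem_of_mem_left ha₁ (h (hsub (Or.inl ha₁)))]
  obtain ⟨s, hs⟩ := sdiff_nonempty.2 (mt subset_interior_iff_isOpen.1 hA)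
  obtain ⟨r, hr⟩ := (nonempty_compl (s := A)).2 fun h => hA (h ▸ isOpen_univ)
  refine exists_le_card_of_injective (x := ![a₁, a₂, t, s, r]) <|
    Fin.injective_of_mem_of_notMem_pred (S := ![U₁, U₁ ∪ U₂, interior A, A, univ]) ?_ ?_ ?_
  · refine Fin.monotone_iff_le_succ.2 fun i => ?_
    fin_cases i
    exacts [subset_union_left, hsub, interior_subset, subset_univ A]
  · intro i
    fin_cases i
    exacts [ha₁, Or.inr ha₂, ht.1, hs.1, mem_univ r]
  · intro i
    fin_cases i
    exacts [hd.notMem_of_mem_right ha₂, ht.2, hs.2, hr]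

end Topology

section RegClosed

variable {X : Type} [TopologicalSpace X] {A B : Set X}

theorem RegClosed.isClosed (hA : RegClosed A) : IsClosed A :=
  hA ▸ isClosed_closure

theorem IsOpen.regClosed_closure {U : Set X} (hU : IsOpen U) : RegClosed (closure U) :=
  (closure_mono (interior_maximal subset_closure hU)).antisymm
    (closure_minimal interior_subset isClosed_closure)

theorem RegClosed.union (hA : RegClosed A) (hB : RegClosed B) : RegClosed (A ∪ B) :=
  (union_subset (hA.trans_subset (closure_mono (interior_mono subset_union_left)))
    (hB.trans_subset (closure_mono (interior_mono subset_union_right)))).antisymm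
    (closure_minimal interior_subset (hA.isClosed.union hB.isClosed))

theorem RegClosed.nonempty_interior_iff (hA : RegClosed A) :
    (interior A).Nonempty ↔ A.Nonempty := by
  nth_rw 2 [hA]; exact closure_nonempty_iff.symm

theorem RegClosed.not_isOpen_of_union_eq_interior {U V : Set X} (hA : RegClosed A)
    (hU : IsOpen U) (hV : IsOpen V) (hUV : Disjoint U V) (h : U ∪ V = interior A)
    (hmeet : (closure U ∩ closure V).Nonempty) : ¬IsOpen A := by
  obtain ⟨p, hpU, hpV⟩ := hmeet
  intro hAo
  have hp : p ∈ U ∪ V := by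
    rw [h, hAo.interior_eq, hA, ← h]; exact closure_mono subset_union_left hpU
  rcases hp with hp | hp
  exacts [(hUV.symm.closure_left hU).notMem_of_mem_left hpV hp,
    (hUV.closure_left hV).notMem_of_mem_left hpU hp]

end RegClosed

namespace ContactIso

variable {X₁ X₂ : Type} [TopologicalSpace X₁] [TopologicalSpace X₂] {f : Set X₁ → Set X₂}
  {A B : Set X₁}

theorem regClosed_map (hf : ContactIso f) (hA : RegClosed A) : RegClosed (f A) :=
  hf.1.mapsTo hA

theorem inter_nonempty_iff (hf : ContactIso f) (hA : RegClosed A) (hB : RegClosed B) :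
    (f A ∩ f B).Nonempty ↔ (A ∩ B).Nonempty := by
  obtain ⟨-, -, -, -, -, hcontact⟩ := hf
  exact (hcontact A B hA hB).symm

theorem map_nonempty_iff (hf : ContactIso f) (hA : RegClosed A) :
    (f A).Nonempty ↔ A.Nonempty := by
  simpa only [inter_self] using hf.inter_nonempty_iff hA hA

theorem map_closure_interior_inter (hf : ContactIso f) (hA : RegClosed A) (hB : RegClosed B) :
    f (closure (interior A ∩ interior B)) = closure (interior (f A) ∩ interior (f B)) := by
  obtain ⟨-, -, -, hunion, hcompl, -⟩ := hf
  have hA' := hA.isClosed.isOpen_compl.regClosed_closure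
  have hB' := hB.isClosed.isOpen_compl.regClosed_closure
  rw [← closure_compl_union_closure_compl, ← closure_compl_union_closure_compl,
    hcompl _ (hA'.union hB'), hunion _ _ hA' hB', hcompl _ hA, hcompl _ hB]

theorem disjoint_interior_map_iff (hf : ContactIso f) (hA : RegClosed A) (hB : RegClosed B) :
    Disjoint (interior (f A)) (interior (f B)) ↔ Disjoint (interior A) (interior B) := by
  rw [disjoint_iff_inter_eq_empty, disjoint_iff_inter_eq_empty, ← closure_empty_iff,
    ← closure_empty_iff (_ ∩ _), ← hf.map_closure_interior_inter hA hB]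
  simpa only [not_nonempty_iff_eq_empty] using
    (hf.map_nonempty_iff (isOpen_interior.inter isOpen_interior).regClosed_closure).not

theorem isOpen_map_iff (hf : ContactIso f) (hA : RegClosed A) : IsOpen (f A) ↔ IsOpen A := by
  rw [isOpen_iff_inter_closure_compl_eq_empty, isOpen_iff_inter_closure_compl_eq_empty,
    ← not_nonempty_iff_eq_empty, ← not_nonempty_iff_eq_empty,
    ← hf.inter_nonempty_iff hA hA.isClosed.isOpen_compl.regClosed_closure]
  obtain ⟨-, -, -, -, hcompl, -⟩ := hf
  rw [hcompl A hA]

theorem exists_union_eq (hf : ContactIso f) (hA : RegClosed A) {B₁ B₂ : Set X₂}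
    (hB₁ : RegClosed B₁) (hB₂ : RegClosed B₂) (h : f A = B₁ ∪ B₂) :
    ∃ A₁ A₂, RegClosed A₁ ∧ RegClosed A₂ ∧ f A₁ = B₁ ∧ f A₂ = B₂ ∧ A₁ ∪ A₂ = A := by
  obtain ⟨⟨-, hinj, hsurj⟩, -, -, hunion, -, -⟩ := hf
  obtain ⟨A₁, hA₁, rfl⟩ := hsurj hB₁
  obtain ⟨A₂, hA₂, rfl⟩ := hsurj hB₂
  exact ⟨A₁, A₂, hA₁, hA₂, rfl, rfl, hinj (hA₁.union hA₂) hA (by rw [hunion _ _ hA₁ hA₂, h])⟩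

end ContactIso

/-- If f is a contact-preserving Boolean isomorphism between the
regular closed algebras of X₁ and X₂ and some regular closed A ⊆ X₁ has a nonempty
connected interior while the interior of f(A) is not preconnected, then it is not
the case that both X₁ and X₂ have at most four points; that is, at least one of the
two spaces has at least five points (and the other has at least four). -/
theorem stmt13 {X₁ X₂ : Type} [TopologicalSpace X₁] [TopologicalSpace X₂]
    (f : Set X₁ → Set X₂) (hf : ContactIso f)
    (A : Set X₁) (hA : RegClosed A)
    (hAc : IsConnected (interior A))
    (hfA : ¬ IsPreconnected (interior (f A))) :
    ¬ ((∀ s : Finset X₁, s.card ≤ 4) ∧ (∀ s : Finset X₂, s.card ≤ 4)) ∧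
    ((∃ s : Finset X₁, 5 ≤ s.card) ∨ (∃ s : Finset X₂, 5 ≤ s.card)) ∧
    (∃ s : Finset X₁, 4 ≤ s.card) ∧ (∃ s : Finset X₂, 4 ≤ s.card) := by
  obtain ⟨U, V, hU, hV, hu, hv, hUV, hUV_eq⟩ :=
    isOpen_interior.exists_split_of_not_isPreconnected hfA
  have hfA_eq : f A = closure U ∪ closure V := by
    rw [← closure_union, hUV_eq]; exact hf.regClosed_map hA
  obtain ⟨A₁, A₂, hA₁, hA₂, hfA₁, hfA₂, rfl⟩ :=
    hf.exists_union_eq hA hU.regClosed_closure hV.regClosed_closure hfA_eq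
  have hne₁ : A₁.Nonempty := by
    rw [← hf.map_nonempty_iff hA₁, hfA₁]; exact hu.mono subset_closure
  have hne₂ : A₂.Nonempty := by
    rw [← hf.map_nonempty_iff hA₂, hfA₂]; exact hv.mono subset_closure
  have hmeet : (closure U ∩ closure V).Nonempty := by
    rw [← hfA₁, ← hfA₂, hf.inter_nonempty_iff hA₁ hA₂]
    refine IsPreconnected.inter_nonempty_of_isClosed ?_ hA₁.isClosed hA₂.isClosed hne₁ hne₂
    rw [hA]; exact hAc.isPreconnected.closure
  have hfA_open : ¬IsOpen (f (A₁ ∪ A₂)) :=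
    (hf.regClosed_map hA).not_isOpen_of_union_eq_interior hU hV hUV hUV_eq hmeet
  have hdisj : Disjoint (interior A₁) (interior A₂) := by
    rw [← hf.disjoint_interior_map_iff hA₁ hA₂, hfA₁, hfA₂]; exact hUV.interior_closure hV
  have h₅ : ∃ s : Finset X₁, 5 ≤ s.card :=
    exists_five_le_card_of_not_isOpen isOpen_interior isOpen_interior hdisj
      (union_subset (interior_mono subset_union_left) (interior_mono subset_union_right))
      hAc.isPreconnected (hA₁.nonempty_interior_iff.2 hne₁) (hA₂.nonempty_interior_iff.2 hne₂)
      ((hf.isOpen_map_iff hA).not.1 hfA_open)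
  have h₄ : ∃ s : Finset X₂, 4 ≤ s.card :=
    exists_four_le_card_of_not_isOpen hUV hUV_eq.le hu hv hfA_open
  refine ⟨fun h => ?_, Or.inl h₅, h₅.imp fun _ hs => by omega, h₄⟩
  obtain ⟨s, hs⟩ := h₅
  have := h.1 s
  omega
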